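/- Hölder-type loss transfer via Rényi divergence: let P and Q be probability distributions on a finite set X × Y with Q strictly positive, let f : X × Y → [0, M] be any function with values bounded by M > 0, and let α > 1. Then E_{(x,y)∼P}[f(x, y)] ≤ [ d_α(P ‖ Q) · E_{(x,y)∼Q}[f(x, y)] ]^((α−1)/α) · M^(1/α). -/

import Mathlib

open scoped BigOperators

/-- Exponential Rényi divergence `d_α(P ‖ Q)` between functions on a finite set. -/
noncomputable def expRenyi {Z : Type*} [Fintype Z] (α : ℝ) (P Q : Z → ℝ) : ℝ :=
  (∑ z, P z ^ α / Q z ^ (α - 1)) ^ (1 / (α - 1))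

/-!
Write `P f = (P / Q^{1/q}) · (Q^{1/q} f)` with `q = α / (α - 1)` and apply Hölder with exponents
`α` and `q`: the first factor gives `(∑ P^α / Q^{α-1})^{1/α} = d_α(P ‖ Q)^{(α-1)/α}`, and the second
is `(∑ Q f^q)^{1/q}`, where `f^q ≤ f · M^{q-1}` bounds `∑ Q f^q` by `M^{1/(α-1)} · E_Q[f]`.
-/

open Real

lemma rpow_le_mul_rpow_sub_one {x M q : ℝ} (hx : 0 ≤ x) (hxM : x ≤ M) (hq : 1 ≤ q) :
    x ^ q ≤ x * M ^ (q - 1) := by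
  rcases hx.eq_or_lt with rfl | hx_pos
  · rw [zero_rpow (by linarith), zero_mul]
  · calc x ^ q = x * x ^ (q - 1) := by
          rw [rpow_sub_one hx_pos.ne', mul_div_cancel₀ _ hx_pos.ne']
      _ ≤ x * M ^ (q - 1) := by gcongr

lemma sum_mul_rpow_le_rpow_sub_one_mul_sum {ι : Type*} [Fintype ι] {Q f : ι → ℝ} {M q : ℝ}
    (hQ : ∀ i, 0 ≤ Q i) (hf0 : ∀ i, 0 ≤ f i) (hfM : ∀ i, f i ≤ M) (hq : 1 ≤ q) :
    ∑ i, Q i * f i ^ q ≤ M ^ (q - 1) * ∑ i, Q i * f i := by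
  rw [Finset.mul_sum]
  refine Finset.sum_le_sum fun i _ => ?_
  calc Q i * f i ^ q ≤ Q i * (f i * M ^ (q - 1)) :=
        mul_le_mul_of_nonneg_left (rpow_le_mul_rpow_sub_one (hf0 i) (hfM i) hq) (hQ i)
    _ = M ^ (q - 1) * (Q i * f i) := by ring

lemma sum_mul_le_renyiSum_rpow_mul {ι : Type*} [Fintype ι] {P Q g : ι → ℝ} {p q : ℝ}
    (hpq : p.HolderConjugate q) (hP : ∀ i, 0 ≤ P i) (hQ : ∀ i, 0 < Q i) (hg : ∀ i, 0 ≤ g i) :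
    ∑ i, P i * g i ≤
      (∑ i, P i ^ p / Q i ^ (p - 1)) ^ (1 / p) * (∑ i, Q i * g i ^ q) ^ (1 / q) := by
  have hQq : ∀ i, 0 < Q i ^ (1 / q) := fun i => rpow_pos_of_pos (hQ i) _
  have h_split : ∀ i, P i * g i = P i / Q i ^ (1 / q) * (Q i ^ (1 / q) * g i) := fun i => by
    rw [← mul_assoc, div_mul_cancel₀ _ (hQq i).ne']
  have hF : ∀ i, (P i / Q i ^ (1 / q)) ^ p = P i ^ p / Q i ^ (p - 1) := fun i => by
    rw [div_rpow (hP i) (hQq i).le, ← rpow_mul (hQ i).le, ← hpq.div_conj_eq_sub_one,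
      one_div_mul_eq_div]
  have hG : ∀ i, (Q i ^ (1 / q) * g i) ^ q = Q i * g i ^ q := fun i => by
    rw [mul_rpow (hQq i).le (hg i), ← rpow_mul (hQ i).le,
      one_div_mul_cancel hpq.symm.ne_zero, rpow_one]
  simpa only [← h_split, hF, hG] using
    inner_le_Lp_mul_Lq_of_nonneg Finset.univ hpq
      (fun i _ => div_nonneg (hP i) (hQq i).le) (fun i _ => mul_nonneg (hQq i).le (hg i))

theorem holder_loss_transfer_general {X Y : Type*} [Fintype X] [Fintype Y]
    (P Q : X × Y → ℝ)
    (hP : ∀ v, 0 ≤ P v)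
    (hQpos : ∀ v, 0 < Q v)
    (f : X × Y → ℝ) (M : ℝ) (hM : 0 < M)
    (hf0 : ∀ v, 0 ≤ f v) (hfM : ∀ v, f v ≤ M)
    (α : ℝ) (hα : 1 < α) :
    ∑ v, P v * f v ≤
      (expRenyi α P Q * ∑ v, Q v * f v) ^ ((α - 1) / α) * M ^ (1 / α) := by
  have hpq := HolderConjugate.conjExponent hα
  set q := conjExponent α
  have hq_sub_one : q - 1 = 1 / (α - 1) := by
    simp only [q, conjExponent]; field_simp [hpq.sub_one_ne_zero]; ring
  have hq_inv : 1 / q = (α - 1) / α := by simp only [q, conjExponent, one_div_div]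
  set S := ∑ v, P v ^ α / Q v ^ (α - 1)
  set T := ∑ v, Q v * f v
  have hS : 0 ≤ S := Finset.sum_nonneg fun v _ => by have := hP v; have := hQpos v; positivity
  have hT : 0 ≤ T := Finset.sum_nonneg fun v _ => mul_nonneg (hQpos v).le (hf0 v)
  have h_moment : ∑ v, Q v * f v ^ q ≤ M ^ (1 / (α - 1)) * T := by
    simpa only [hq_sub_one] using sum_mul_rpow_le_rpow_sub_one_mul_sum (fun v => (hQpos v).le)
      hf0 hfM hpq.symm.lt.le
  calc ∑ v, P v * f v ≤ S ^ (1 / α) * (∑ v, Q v * f v ^ q) ^ (1 / q) :=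
        sum_mul_le_renyiSum_rpow_mul hpq hP hQpos hf0
    _ ≤ S ^ (1 / α) * (M ^ (1 / (α - 1)) * T) ^ (1 / q) := by
        gcongr
        · exact Finset.sum_nonneg fun v _ => by have := hQpos v; have := hf0 v; positivity
        · exact hpq.symm.one_div_nonneg
    _ = (S ^ (1 / (α - 1)) * T) ^ ((α - 1) / α) * M ^ (1 / α) := by
        have h_exp : 1 / (α - 1) * ((α - 1) / α) = 1 / α := by field_simp [hpq.sub_one_ne_zero]
        rw [hq_inv, mul_rpow (by positivity) hT, mul_rpow (by positivity) hT, ← rpow_mul hS,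
          ← rpow_mul hM.le, h_exp]
        ring

/-- Hölder-type loss transfer via Rényi divergence: for probability distributions
`P, Q` on a finite set `X × Y` with `Q` strictly positive, a function `f` with
values in `[0, M]`, and `α > 1`,
`E_P[f] ≤ (d_α(P ‖ Q) · E_Q[f])^((α−1)/α) · M^(1/α)`. -/
theorem holder_loss_transfer {X Y : Type*} [Fintype X] [Fintype Y]
    (P Q : X × Y → ℝ)
    (hP : ∀ v, 0 ≤ P v) (hPsum : ∑ v, P v = 1)
    (hQpos : ∀ v, 0 < Q v) (hQsum : ∑ v, Q v = 1)
    (f : X × Y → ℝ) (M : ℝ) (hM : 0 < M)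
    (hf0 : ∀ v, 0 ≤ f v) (hfM : ∀ v, f v ≤ M)
    (α : ℝ) (hα : 1 < α) :
    ∑ v, P v * f v ≤
      (expRenyi α P Q * ∑ v, Q v * f v) ^ ((α - 1) / α) * M ^ (1 / α) :=
  holder_loss_transfer_general P Q hP hQpos f M hM hf0 hfM α hα
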